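/- Let β ∈ Φ⁺ be a simple root, let s = s_β, let λ ∈ X satisfy ⟨λ, β∨⟩ < 0, and let v ∈ W satisfy vβ ∈ −Φ⁺. Then ℓ(v t_λ) = ℓ(v s · t_{sλ}) − 1, where both lengths are given by the Iwahori–Matsumoto formula. -/

import Mathlib

open scoped BigOperators

/-- The data of a finite reduced crystallographic root system `Φ`, with a chosen system of
positive roots `pos` cut out by a homomorphism `f : X → ℝ` not vanishing on any root, inside a
finitely generated free abelian group `X` (the weight lattice).  For each root `α` we record its
coroot `coroot α : X →+ ℤ` and the associated reflection `s α : x ↦ x - ⟨x, α∨⟩ • α`, an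
automorphism of `X`.  The reflections preserve `Φ` and the coroots are equivariant for them. -/
structure RootSystemData (X : Type*) [AddCommGroup X] [Module.Free ℤ X] [Module.Finite ℤ X] where
  /-- the (finite) set of roots -/
  Φ : Finset X
  /-- the set of positive roots -/
  pos : Finset X
  /-- the coroot attached to each root, as a homomorphism `X → ℤ` -/
  coroot : X → (X →+ ℤ)
  /-- the reflection attached to each root -/
  s : X → AddAut X
  /-- a homomorphism `X → ℝ` cutting out the positive roots -/
  f : X →+ ℝ
  f_ne : ∀ α ∈ Φ, f α ≠ 0
  pos_def : ∀ α, α ∈ pos ↔ α ∈ Φ ∧ 0 < f α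
  pairing_self : ∀ α ∈ Φ, coroot α α = 2
  s_apply : ∀ α ∈ Φ, ∀ x : X, s α x = x - coroot α x • α
  s_stable : ∀ α ∈ Φ, ∀ β ∈ Φ, s α β ∈ Φ
  reduced : ∀ α ∈ Φ, ∀ n : ℤ, n • α ∈ Φ → n = 1 ∨ n = -1
  coroot_equivariant : ∀ α ∈ Φ, ∀ β ∈ Φ, ∀ x : X, coroot (s α β) x = coroot β ((-(s α)) x)

namespace RootSystemData

variable {X : Type*} [AddCommGroup X] [Module.Free ℤ X] [Module.Finite ℤ X] [DecidableEq X]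
  (R : RootSystemData X)

/-- The Weyl group `W`, the subgroup of `Aut(X)` generated by the reflections `s_α`, `α ∈ Φ`. -/
def W : AddSubgroup (AddAut X) := AddSubgroup.closure (R.s '' ↑R.Φ)

/-- A weight `λ` is dominant if `⟨λ, α∨⟩ ≥ 0` for all positive roots `α`. -/
def IsDominant (lam : X) : Prop := ∀ α ∈ R.pos, 0 ≤ R.coroot α lam

/-- `ℓ(u) = #{α ∈ Φ⁺ : uα ∈ −Φ⁺}` for `u` in the (finite) Weyl group. -/
def lenW (u : AddAut X) : ℕ := (R.pos.filter (fun α => -(u α) ∈ R.pos)).card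

/-- The Iwahori–Matsumoto length of the element `u t_λ` of the extended affine Weyl group
`W_aff = W ⋉ X`:
`ℓ(u t_λ) = Σ_{α ∈ Φ⁺ ∩ u⁻¹(Φ⁺)} |⟨λ, α∨⟩| + Σ_{α ∈ Φ⁺ ∩ u⁻¹(−Φ⁺)} |1 + ⟨λ, α∨⟩|`. -/
def lenAff (u : AddAut X) (lam : X) : ℕ :=
  ∑ α ∈ R.pos.filter (fun α => u α ∈ R.pos), (R.coroot α lam).natAbs
    + ∑ α ∈ R.pos.filter (fun α => -(u α) ∈ R.pos), (1 + R.coroot α lam).natAbs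

/-- The length of the translation `t_λ`: `ℓ(t_λ) = Σ_{α ∈ Φ⁺} |⟨λ, α∨⟩|`. -/
def lenT (lam : X) : ℕ := ∑ α ∈ R.pos, (R.coroot α lam).natAbs

end RootSystemData

/-!
Write both Iwahori–Matsumoto lengths as sums over `Φ⁺` of one term function `γ ↦ T(γ)`
depending only on `v` and `λ`: substituting `α ↦ s_β α` and using `⟨s_β λ, α∨⟩ = ⟨λ, (s_β α)∨⟩`
shows `ℓ(v s_β t_{s_β λ}) = Σ_{α ∈ Φ⁺} T(s_β α)`. Since `β` is simple, `s_β` permutes `Φ⁺` except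
that it sends `β` to `-β`, so the two lengths differ by `T(-β) - T(β)`. As `vβ` is negative,
`T(β) = |1 + ⟨λ, β∨⟩|` and `T(-β) = |⟨λ, β∨⟩|`, and these differ by one because `⟨λ, β∨⟩ < 0`.
-/

open Finset

namespace RootSystemData

variable {X : Type*} [AddCommGroup X] [Module.Free ℤ X] [Module.Finite ℤ X]
  (R : RootSystemData X)

theorem s_s_apply {α : X} (hα : α ∈ R.Φ) (x : X) : R.s α (R.s α x) = x := by
  rw [R.s_apply α hα (R.s α x), R.s_apply α hα x, map_sub, map_zsmul, R.pairing_self α hα,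
    smul_eq_mul, mul_two, sub_add_eq_sub_sub, sub_sub_cancel_left, neg_smul]
  abel

theorem neg_s_apply {α : X} (hα : α ∈ R.Φ) (x : X) : (-R.s α) x = R.s α x := by
  rw [AddAut.neg_apply, AddEquiv.symm_apply_eq, R.s_s_apply hα]

theorem s_self {α : X} (hα : α ∈ R.Φ) : R.s α α = -α := by
  rw [R.s_apply α hα, R.pairing_self α hα, two_zsmul]
  abel

theorem coroot_s_apply {α γ : X} (hα : α ∈ R.Φ) (hγ : γ ∈ R.Φ) (x : X) :
    R.coroot (R.s α γ) x = R.coroot γ (R.s α x) := by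
  rw [R.coroot_equivariant α hα γ hγ, R.neg_s_apply hα]

theorem coroot_neg {α : X} (hα : α ∈ R.Φ) (x : X) : R.coroot (-α) x = -R.coroot α x := by
  rw [← R.s_self hα, R.coroot_s_apply hα hα, R.s_apply α hα, map_sub, map_zsmul,
    R.pairing_self α hα, smul_eq_mul]
  ring

theorem mem_Φ_of_mem_pos {α : X} (hα : α ∈ R.pos) : α ∈ R.Φ :=
  ((R.pos_def α).mp hα).1

theorem neg_notMem_pos {α : X} (hα : α ∈ R.pos) : -α ∉ R.pos := by
  intro hneg
  have h₁ := ((R.pos_def α).mp hα).2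
  have h₂ := ((R.pos_def (-α)).mp hneg).2
  rw [map_neg] at h₂
  linarith

variable [DecidableEq X]

def lenAffTerm (u : AddAut X) (lam γ : X) : ℕ :=
  (if u γ ∈ R.pos then (R.coroot γ lam).natAbs else 0)
    + (if -(u γ) ∈ R.pos then (1 + R.coroot γ lam).natAbs else 0)

theorem lenAff_eq_sum_lenAffTerm (u : AddAut X) (lam : X) :
    R.lenAff u lam = ∑ α ∈ R.pos, R.lenAffTerm u lam α := by
  rw [lenAff, sum_filter, sum_filter, ← sum_add_distrib]
  rfl

theorem lenAffTerm_add_s {β : X} (hβ : β ∈ R.Φ) (u : AddAut X) (lam : X) {α : X}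
    (hα : α ∈ R.Φ) :
    R.lenAffTerm (u + R.s β) (R.s β lam) α = R.lenAffTerm u lam (R.s β α) := by
  simp only [lenAffTerm, AddAut.add_apply, ← R.coroot_s_apply hβ hα]

theorem sum_pos_comp_s_of_simple {M : Type*} [AddCommMonoid M] {β : X} (hβ : β ∈ R.pos)
    (hsimple : R.pos.image (fun α => R.s β α) = insert (-β) (R.pos.erase β)) (g : X → M) :
    ∑ α ∈ R.pos, g (R.s β α) = g (-β) + ∑ γ ∈ R.pos.erase β, g γ := by
  rw [← sum_image (R.s β).injective.injOn, hsimple,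
    sum_insert fun h => R.neg_notMem_pos hβ (mem_erase.mp h).2]

theorem lenAff_add_s_add_lenAffTerm_of_simple {β : X} (hβ : β ∈ R.pos)
    (hsimple : R.pos.image (fun α => R.s β α) = insert (-β) (R.pos.erase β))
    (u : AddAut X) (lam : X) :
    R.lenAff (u + R.s β) (R.s β lam) + R.lenAffTerm u lam β
      = R.lenAff u lam + R.lenAffTerm u lam (-β) := by
  have hβΦ := R.mem_Φ_of_mem_pos hβ
  rw [lenAff_eq_sum_lenAffTerm, lenAff_eq_sum_lenAffTerm,
    sum_congr rfl fun α hα => R.lenAffTerm_add_s hβΦ u lam (R.mem_Φ_of_mem_pos hα),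
    R.sum_pos_comp_s_of_simple hβ hsimple, ← add_sum_erase _ _ hβ]
  ring

theorem lenAffTerm_of_neg_mem_pos {u : AddAut X} {β : X} (huβ : -(u β) ∈ R.pos) (lam : X) :
    R.lenAffTerm u lam β = (1 + R.coroot β lam).natAbs := by
  have : u β ∉ R.pos := by simpa using R.neg_notMem_pos huβ
  simp [lenAffTerm, huβ, this]

theorem lenAffTerm_neg_of_neg_mem_pos {u : AddAut X} {β : X} (hβ : β ∈ R.Φ)
    (huβ : -(u β) ∈ R.pos) (lam : X) :
    R.lenAffTerm u lam (-β) = (R.coroot β lam).natAbs := by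
  have : u β ∉ R.pos := by simpa using R.neg_notMem_pos huβ
  simp [lenAffTerm, huβ, this, R.coroot_neg hβ]

end RootSystemData

theorem length_step_simple_reflection_general
    {X : Type*} [AddCommGroup X] [Module.Free ℤ X] [Module.Finite ℤ X] [DecidableEq X]
    (R : RootSystemData X) (β : X) (hβ : β ∈ R.pos)
    (hsimple : R.pos.image (fun α => R.s β α) = insert (-β) (R.pos.erase β))
    (lam : X) (hlam : R.coroot β lam < 0)
    (v : AddAut X) (hvβ : -(v β) ∈ R.pos) :
    (R.lenAff v lam : ℤ) = (R.lenAff (v + R.s β) (R.s β lam) : ℤ) - 1 := by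
  have hstep := R.lenAff_add_s_add_lenAffTerm_of_simple hβ hsimple v lam
  rw [R.lenAffTerm_of_neg_mem_pos hvβ,
    R.lenAffTerm_neg_of_neg_mem_pos (R.mem_Φ_of_mem_pos hβ) hvβ] at hstep
  omega

/-- Let `β ∈ Φ⁺` be a simple root (i.e. `s_β(Φ⁺) = (Φ⁺ ∖ {β}) ∪ {−β}`), let `s = s_β`, let
`λ ∈ X` satisfy `⟨λ, β∨⟩ < 0`, and let `v ∈ W` satisfy `vβ ∈ −Φ⁺`.  Then
`ℓ(v t_λ) = ℓ(v s · t_{sλ}) − 1`, where both lengths are given by the Iwahori–Matsumoto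
formula. -/
theorem length_step_simple_reflection
    {X : Type*} [AddCommGroup X] [Module.Free ℤ X] [Module.Finite ℤ X] [DecidableEq X]
    (R : RootSystemData X) (β : X) (hβ : β ∈ R.pos)
    (hsimple : R.pos.image (fun α => R.s β α) = insert (-β) (R.pos.erase β))
    (lam : X) (hlam : R.coroot β lam < 0)
    (v : AddAut X) (hv : v ∈ R.W) (hvβ : -(v β) ∈ R.pos) :
    (R.lenAff v lam : ℤ) = (R.lenAff (v + R.s β) (R.s β lam) : ℤ) - 1 :=
  length_step_simple_reflection_general R β hβ hsimple lam hlam v hvβ
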